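/- arXiv:2510.02285 — 7 statements merged into one kernel-verified Lean document; each statement's English description precedes it below -/
import Mathlib

section
/- For all x, y ∈ X one has P(x,y) ≥ 1/(|stab_G(x)|·|X|) > 0; in particular the Burnside kernel is a strictly positive (hence ergodic) Markov kernel. -/
/-- The stabilizer of `x ∈ X` in the finite group `G`, as a `Finset`. -/
def stabFinset (G X : Type*) [Group G] [Fintype G] [MulAction G X] [DecidableEq X]
    (x : X) : Finset G :=
  Finset.univ.filter fun g : G => g • x = x

/-- The set of fixed points of `g ∈ G` on `X`, as a `Finset`. -/
def fixFinset (G X : Type*) [Group G] [Fintype X] [MulAction G X] [DecidableEq X]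
    (g : G) : Finset X :=
  Finset.univ.filter fun y : X => g • y = y

/-- The Burnside kernel
`P(x,y) = (1/|stab_G(x)|) · Σ_{g ∈ stab_G(x) ∩ stab_G(y)} 1/|Fix_X(g)|`. -/
noncomputable def burnsideKernel (G X : Type*) [Group G] [Fintype G] [DecidableEq G]
    [Fintype X] [MulAction G X] [DecidableEq X] (x y : X) : ℝ :=
  ((stabFinset G X x).card : ℝ)⁻¹ *
    ∑ g ∈ stabFinset G X x ∩ stabFinset G X y, ((fixFinset G X g).card : ℝ)⁻¹

/-- For all `x, y ∈ X`, `P(x,y) ≥ 1/(|stab_G(x)|·|X|) > 0`; in particular the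
Burnside kernel is a strictly positive (hence ergodic) Markov kernel. -/
theorem burnside_kernel_strictly_positive (G X : Type*) [Group G] [Fintype G]
    [DecidableEq G] [Fintype X] [Nonempty X] [MulAction G X] [DecidableEq X]
    (x y : X) :
    0 < 1 / (((stabFinset G X x).card : ℝ) * (Fintype.card X : ℝ)) ∧
      1 / (((stabFinset G X x).card : ℝ) * (Fintype.card X : ℝ)) ≤
        burnsideKernel G X x y := by
  have hone : (1 : G) ∈ stabFinset G X x ∩ stabFinset G X y := by
    simp [stabFinset]
  have hs : 0 < (stabFinset G X x).card := by
    refine Finset.card_pos.mpr ⟨1, ?_⟩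
    simp [stabFinset]
  have hsR : 0 < ((stabFinset G X x).card : ℝ) := by exact_mod_cast hs
  have hXR : 0 < (Fintype.card X : ℝ) := by
    exact_mod_cast Fintype.card_pos
  constructor
  · positivity
  · have hfix1 : fixFinset G X (1 : G) = Finset.univ := by
      ext z; simp [fixFinset]
    have hsum : ((Fintype.card X : ℝ))⁻¹ ≤
        ∑ g ∈ stabFinset G X x ∩ stabFinset G X y, ((fixFinset G X g).card : ℝ)⁻¹ := by
      have := Finset.single_le_sum
        (f := fun g : G => ((fixFinset G X g).card : ℝ)⁻¹)
        (fun g _ => by positivity) hone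
      simpa [hfix1, Finset.card_univ] using this
    rw [burnsideKernel, one_div, mul_inv]
    exact mul_le_mul_of_nonneg_left hsum (by positivity)
end

section
/- The Burnside kernel satisfies detailed balance with respect to π: for all x, y ∈ X, π(x)·P(x,y) = π(y)·P(y,x). -/
/-- The orbit `O_x = G·x` of `x ∈ X`, as a `Finset`. -/
def orbitFinset (G X : Type*) [Group G] [Fintype G] [Fintype X] [MulAction G X]
    [DecidableEq X] (x : X) : Finset X :=
  Finset.univ.filter fun y : X => ∃ g : G, g • x = y

/-- The number of `G`-orbits on `X`, i.e. `|Θ|`. -/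
def numOrbits (G X : Type*) [Group G] [Fintype G] [Fintype X] [MulAction G X]
    [DecidableEq X] : ℕ :=
  (Finset.univ.image fun z : X => orbitFinset G X z).card

/-- The stationary distribution `π(x) = 1/(|Θ|·|O_x|)`. -/
noncomputable def burnsidePi (G X : Type*) [Group G] [Fintype G] [Fintype X]
    [MulAction G X] [DecidableEq X] (x : X) : ℝ :=
  ((numOrbits G X : ℝ) * ((orbitFinset G X x).card : ℝ))⁻¹

/-!
By orbit–stabilizer, `|O_x| · |stab_G(x)| = |G|`, so `π(x) · P(x,y)` equals
`(|Θ| · |G|)⁻¹ · Σ_{g ∈ stab_G(x) ∩ stab_G(y)} 1/|Fix_X(g)|`, which is symmetric in `x` and `y`.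
-/

theorem card_orbitFinset_mul_card_stabFinset (G X : Type*) [Group G] [Fintype G] [Fintype X]
    [MulAction G X] [DecidableEq X] (x : X) :
    (orbitFinset G X x).card * (stabFinset G X x).card = Fintype.card G := by
  classical
  rw [← MulAction.card_orbit_mul_card_stabilizer_eq_card_group G x, Fintype.card_subtype,
    Fintype.card_subtype]
  simp [orbitFinset, stabFinset, MulAction.mem_orbit_iff]

theorem burnsidePi_mul_burnsideKernel (G X : Type*) [Group G] [Fintype G] [DecidableEq G]
    [Fintype X] [MulAction G X] [DecidableEq X] (x y : X) :
    burnsidePi G X x * burnsideKernel G X x y =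
      ((numOrbits G X : ℝ) * Fintype.card G)⁻¹ *
        ∑ g ∈ stabFinset G X x ∩ stabFinset G X y, ((fixFinset G X g).card : ℝ)⁻¹ := by
  rw [burnsidePi, burnsideKernel, ← card_orbitFinset_mul_card_stabFinset G X x]
  push_cast
  ring

theorem burnside_detailed_balance_general (G X : Type*) [Group G] [Fintype G]
    [DecidableEq G] [Fintype X] [MulAction G X] [DecidableEq X]
    (x y : X) :
    burnsidePi G X x * burnsideKernel G X x y =
      burnsidePi G X y * burnsideKernel G X y x := by
  rw [burnsidePi_mul_burnsideKernel, burnsidePi_mul_burnsideKernel, Finset.inter_comm]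

/-- The Burnside kernel satisfies detailed balance with respect to `π`:
for all `x, y ∈ X`, `π(x)·P(x,y) = π(y)·P(y,x)`. -/
theorem burnside_detailed_balance (G X : Type*) [Group G] [Fintype G]
    [DecidableEq G] [Fintype X] [Nonempty X] [MulAction G X] [DecidableEq X]
    (x y : X) :
    burnsidePi G X x * burnsideKernel G X x y =
      burnsidePi G X y * burnsideKernel G X y x :=
  burnside_detailed_balance_general G X x y
end

section
/- The function π is the stationary probability distribution of the Burnside kernel: Σ_{x ∈ X} π(x) = 1, and for every y ∈ X, Σ_{x ∈ X} π(x)·P(x,y) = π(y). -/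
section Aux

variable {G X : Type*} [Group G] [Fintype G] [Fintype X] [MulAction G X] [DecidableEq X]

lemma mem_orbitFinset_iff {x y : X} : y ∈ orbitFinset G X x ↔ y ∈ MulAction.orbit G x := by
  simp [orbitFinset, MulAction.mem_orbit_iff]

lemma mem_orbitFinset_self (x : X) : x ∈ orbitFinset G X x :=
  mem_orbitFinset_iff.2 (MulAction.mem_orbit_self x)

lemma orbitFinset_card_pos (x : X) : 0 < (orbitFinset G X x).card :=
  Finset.card_pos.2 ⟨x, mem_orbitFinset_self x⟩

lemma orbitFinset_eq_iff {x y : X} :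
    orbitFinset G X x = orbitFinset G X y ↔ x ∈ orbitFinset G X y := by
  constructor
  · intro h; rw [← h]; exact mem_orbitFinset_self x
  · intro h
    have horb : MulAction.orbit G x = MulAction.orbit G y :=
      MulAction.orbit_eq_iff.2 (mem_orbitFinset_iff.1 h)
    ext z
    simp only [mem_orbitFinset_iff, horb]

lemma orbit_stab_card (x : X) :
    (orbitFinset G X x).card * (stabFinset G X x).card = Fintype.card G := by
  letI i1 : Fintype (MulAction.orbit G x) :=
    Fintype.ofFinset (orbitFinset G X x) fun y => mem_orbitFinset_iff
  letI i2 : Fintype (MulAction.stabilizer G x) :=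
    Fintype.ofFinset (stabFinset G X x) fun g => by
      simp [stabFinset, MulAction.mem_stabilizer_iff]
  have h1 : Fintype.card (MulAction.orbit G x) = (orbitFinset G X x).card :=
    Fintype.card_ofFinset _ _
  have h2 : Fintype.card (MulAction.stabilizer G x) = (stabFinset G X x).card :=
    Fintype.card_ofFinset _ _
  rw [← h1, ← h2]
  exact MulAction.card_orbit_mul_card_stabilizer_eq_card_group G x

end Aux

/-- `π` is the stationary probability distribution of the Burnside kernel:
`Σ_{x ∈ X} π(x) = 1`, and for every `y ∈ X`, `Σ_{x ∈ X} π(x)·P(x,y) = π(y)`. -/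
theorem burnside_pi_stationary (G X : Type*) [Group G] [Fintype G]
    [DecidableEq G] [Fintype X] [Nonempty X] [MulAction G X] [DecidableEq X] :
    (∑ x : X, burnsidePi G X x = 1) ∧
      ∀ y : X, ∑ x : X, burnsidePi G X x * burnsideKernel G X x y =
        burnsidePi G X y := by
  classical
  have hΘ : 0 < numOrbits G X := by
    refine Finset.card_pos.2 ?_
    obtain ⟨x⟩ := ‹Nonempty X›
    exact ⟨orbitFinset G X x, Finset.mem_image_of_mem _ (Finset.mem_univ x)⟩
  have hΘR : ((numOrbits G X : ℝ)) ≠ 0 := by positivity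
  have hGR : ((Fintype.card G : ℝ)) ≠ 0 := by
    have := Fintype.card_pos (α := G); positivity
  have hOR : ∀ x : X, ((orbitFinset G X x).card : ℝ) ≠ 0 := fun x => by
    have := orbitFinset_card_pos (G := G) x; positivity
  constructor
  · -- sum to one
    rw [← Finset.sum_fiberwise_of_maps_to
      (g := fun z : X => orbitFinset G X z)
      (fun x _ => Finset.mem_image_of_mem _ (Finset.mem_univ x)) (burnsidePi G X)]
    have hinner : ∀ O ∈ Finset.univ.image fun z : X => orbitFinset G X z,
        (∑ x ∈ Finset.univ.filter fun x => orbitFinset G X x = O, burnsidePi G X x)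
          = ((numOrbits G X : ℝ))⁻¹ := by
      intro O hO
      obtain ⟨z, -, rfl⟩ := Finset.mem_image.1 hO
      have hfil : (Finset.univ.filter fun x => orbitFinset G X x = orbitFinset G X z)
          = orbitFinset G X z := by
        ext w; simp [orbitFinset_eq_iff]
      rw [hfil]
      have : ∀ x ∈ orbitFinset G X z, burnsidePi G X x
          = ((numOrbits G X : ℝ) * ((orbitFinset G X z).card : ℝ))⁻¹ := by
        intro x hx
        have : orbitFinset G X x = orbitFinset G X z := orbitFinset_eq_iff.2 hx
        rw [burnsidePi, this]
      rw [Finset.sum_congr rfl this, Finset.sum_const, nsmul_eq_mul, mul_inv]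
      rw [← mul_assoc, mul_comm ((orbitFinset G X z).card : ℝ), mul_assoc,
        mul_inv_cancel₀ (hOR z), mul_one]
    rw [Finset.sum_congr rfl hinner, Finset.sum_const, nsmul_eq_mul]
    exact mul_inv_cancel₀ hΘR
  · -- stationarity
    intro y
    set C : ℝ := ((numOrbits G X : ℝ) * (Fintype.card G : ℝ))⁻¹ with hC
    have key : ∀ x : X, burnsidePi G X x * ((stabFinset G X x).card : ℝ)⁻¹ = C := by
      intro x
      rw [burnsidePi, ← mul_inv, mul_assoc, ← Nat.cast_mul, orbit_stab_card]
    have step1 : ∀ x : X, burnsidePi G X x * burnsideKernel G X x y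
        = ∑ g ∈ stabFinset G X x ∩ stabFinset G X y, C * ((fixFinset G X g).card : ℝ)⁻¹ := by
      intro x
      rw [burnsideKernel, ← mul_assoc, key x, Finset.mul_sum]
    have hinterf : ∀ x : X, stabFinset G X x ∩ stabFinset G X y
        = Finset.univ.filter fun g : G => g • x = x ∧ g • y = y := by
      intro x; ext g; simp [stabFinset, Finset.mem_inter, and_comm]
    calc ∑ x : X, burnsidePi G X x * burnsideKernel G X x y
        = ∑ x : X, ∑ g : G,
            if g • x = x ∧ g • y = y then C * ((fixFinset G X g).card : ℝ)⁻¹ else 0 := by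
          refine Finset.sum_congr rfl fun x _ => ?_
          rw [step1 x, hinterf x, Finset.sum_filter]
      _ = ∑ g : G, ∑ x : X,
            if g • x = x ∧ g • y = y then C * ((fixFinset G X g).card : ℝ)⁻¹ else 0 :=
          Finset.sum_comm
      _ = ∑ g : G, if g • y = y then C else 0 := by
          refine Finset.sum_congr rfl fun g _ => ?_
          by_cases hgy : g • y = y
          · simp only [hgy, and_true, if_true]
            rw [← Finset.sum_filter]
            have : (Finset.univ.filter fun x : X => g • x = x) = fixFinset G X g := rfl
            rw [this, Finset.sum_const, nsmul_eq_mul]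
            have hfix : ((fixFinset G X g).card : ℝ) ≠ 0 := by
              have : y ∈ fixFinset G X g := by simp [fixFinset, hgy]
              have := Finset.card_pos.2 ⟨y, this⟩
              positivity
            rw [mul_comm C, ← mul_assoc, mul_inv_cancel₀ hfix, one_mul]
          · simp [hgy]
      _ = ((stabFinset G X y).card : ℝ) * C := by
          rw [← Finset.sum_filter]
          have : (Finset.univ.filter fun g : G => g • y = y) = stabFinset G X y := rfl
          rw [this, Finset.sum_const, nsmul_eq_mul]
      _ = burnsidePi G X y := by
          have hos : ((orbitFinset G X y).card : ℝ) * ((stabFinset G X y).card : ℝ)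
              = (Fintype.card G : ℝ) := by
            rw [← Nat.cast_mul, orbit_stab_card]
          have hsR : ((stabFinset G X y).card : ℝ) ≠ 0 := by
            have h1 : (1 : G) ∈ stabFinset G X y := by simp [stabFinset]
            have := Finset.card_pos.2 ⟨(1 : G), h1⟩
            positivity
          have hsplit : (numOrbits G X : ℝ) * (Fintype.card G : ℝ)
              = ((numOrbits G X : ℝ) * ((orbitFinset G X y).card : ℝ))
                * ((stabFinset G X y).card : ℝ) := by
            rw [← hos]; ring
          rw [burnsidePi, hC, hsplit, mul_inv,
            mul_comm (((numOrbits G X : ℝ) * ((orbitFinset G X y).card : ℝ))⁻¹),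
            ← mul_assoc, mul_inv_cancel₀ hsR, one_mul]
end

section
/- Bruhat decomposition, uniqueness of the permutation: for σ, τ ∈ S_n, if M_σ ∈ B·M_τ·B (equivalently, if u₁·M_σ·b₁ = u₂·M_τ·b₂ for some u₁,u₂ ∈ U and b₁,b₂ ∈ B), then σ = τ. -/
/-- `u` is a unipotent upper triangular matrix (upper triangular with all
diagonal entries equal to `1`), i.e. `u` lies in `U`. -/
def IsUnipUpper {n : ℕ} {F : Type*} [Field F] (u : Matrix (Fin n) (Fin n) F) : Prop :=
  (∀ i j : Fin n, j < i → u i j = 0) ∧ ∀ i : Fin n, u i i = 1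

/-- `b` is an invertible upper triangular matrix (upper triangular with all
diagonal entries nonzero), i.e. `b` lies in the Borel subgroup `B`. -/
def IsInvUpper {n : ℕ} {F : Type*} [Field F] (b : Matrix (Fin n) (Fin n) F) : Prop :=
  (∀ i j : Fin n, j < i → b i j = 0) ∧ ∀ i : Fin n, b i i ≠ 0

/-- The permutation matrix `M_σ` with `(M_σ)_{ij} = 1` if `j = σ(i)` and `0` otherwise. -/
def permMat (n : ℕ) (F : Type*) [Field F] (σ : Equiv.Perm (Fin n)) :
    Matrix (Fin n) (Fin n) F :=
  Matrix.of fun i j => if σ i = j then 1 else 0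

section aux
variable {n : ℕ} {F : Type*} [Field F]

lemma tri_of_invUpper {b : Matrix (Fin n) (Fin n) F} (hb : IsInvUpper b) :
    b.BlockTriangular id := fun i j hij => hb.1 i j hij

lemma det_unit_of_invUpper {b : Matrix (Fin n) (Fin n) F} (hb : IsInvUpper b) :
    IsUnit b.det := by
  rw [Matrix.det_of_upperTriangular (tri_of_invUpper hb)]
  exact isUnit_iff_ne_zero.mpr (Finset.prod_ne_zero_iff.mpr fun i _ => hb.2 i)

lemma inv_invUpper {b : Matrix (Fin n) (Fin n) F} (hb : IsInvUpper b) :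
    IsInvUpper b⁻¹ := by
  have hdet := det_unit_of_invUpper hb
  haveI := b.invertibleOfIsUnitDet hdet
  have htri : b⁻¹.BlockTriangular id :=
    Matrix.blockTriangular_inv_of_blockTriangular (tri_of_invUpper hb)
  refine ⟨fun i j hij => htri hij, fun i => ?_⟩
  have h1 : (b * b⁻¹) i i = 1 := by rw [Matrix.mul_nonsing_inv b hdet]; simp
  rw [Matrix.mul_apply] at h1
  have : ∀ k ∈ Finset.univ, k ≠ i → b i k * b⁻¹ k i = 0 := by
    intro k _ hk
    rcases lt_or_gt_of_ne hk with hlt | hgt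
    · rw [hb.1 i k hlt, zero_mul]
    · rw [htri (show (id i : Fin n) < id k from hgt), mul_zero]
  rw [Finset.sum_eq_single_of_mem i (Finset.mem_univ i) this] at h1
  intro h0
  rw [h0, mul_zero] at h1
  exact one_ne_zero h1.symm

lemma invUpper_of_unip {u : Matrix (Fin n) (Fin n) F} (hu : IsUnipUpper u) :
    IsInvUpper u := ⟨hu.1, fun i => by rw [hu.2 i]; exact one_ne_zero⟩

lemma inv_unipUpper {u : Matrix (Fin n) (Fin n) F} (hu : IsUnipUpper u) :
    IsUnipUpper u⁻¹ := by
  have hb := invUpper_of_unip hu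
  have hinv := inv_invUpper hb
  refine ⟨hinv.1, fun i => ?_⟩
  have hdet := det_unit_of_invUpper hb
  have h1 : (u * u⁻¹) i i = 1 := by rw [Matrix.mul_nonsing_inv u hdet]; simp
  rw [Matrix.mul_apply] at h1
  have : ∀ k ∈ Finset.univ, k ≠ i → u i k * u⁻¹ k i = 0 := by
    intro k _ hk
    rcases lt_or_gt_of_ne hk with hlt | hgt
    · rw [hu.1 i k hlt, zero_mul]
    · rw [hinv.1 k i hgt, mul_zero]
  rw [Finset.sum_eq_single_of_mem i (Finset.mem_univ i) this, hu.2 i, one_mul] at h1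
  exact h1

end aux

/-- Bruhat decomposition, uniqueness of the permutation: if
`u₁·M_σ·b₁ = u₂·M_τ·b₂` with `u₁, u₂ ∈ U` and `b₁, b₂ ∈ B`
(equivalently, `M_σ ∈ B·M_τ·B`), then `σ = τ`. -/
theorem bruhat_uniqueness (n : ℕ) (hn : 1 ≤ n) (F : Type*) [Field F] [Fintype F]
    (σ τ : Equiv.Perm (Fin n)) (u₁ u₂ b₁ b₂ : Matrix (Fin n) (Fin n) F)
    (hu₁ : IsUnipUpper u₁) (hu₂ : IsUnipUpper u₂)
    (hb₁ : IsInvUpper b₁) (hb₂ : IsInvUpper b₂)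
    (h : u₁ * permMat n F σ * b₁ = u₂ * permMat n F τ * b₂) :
    σ = τ := by
  -- rearrange: permMat σ * (b₁ * b₂⁻¹) = (u₁⁻¹ * u₂) * permMat τ
  set c := b₁ * b₂⁻¹ with hc
  set v := u₁⁻¹ * u₂ with hv
  have hu₁det := det_unit_of_invUpper (invUpper_of_unip hu₁)
  have hb₂det := det_unit_of_invUpper hb₂
  have key : permMat n F σ * c = v * permMat n F τ := by
    have h1 : u₁⁻¹ * u₁ = 1 := Matrix.nonsing_inv_mul u₁ hu₁det
    have h2 : b₂ * b₂⁻¹ = 1 := Matrix.mul_nonsing_inv b₂ hb₂det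
    calc permMat n F σ * c
        = (u₁⁻¹ * u₁) * permMat n F σ * (b₁ * b₂⁻¹) := by rw [h1, hc]; simp
      _ = u₁⁻¹ * (u₁ * permMat n F σ * b₁) * b₂⁻¹ := by simp only [mul_assoc]
      _ = u₁⁻¹ * (u₂ * permMat n F τ * b₂) * b₂⁻¹ := by rw [h]
      _ = v * permMat n F τ * (b₂ * b₂⁻¹) := by simp only [hv, mul_assoc]
      _ = v * permMat n F τ := by rw [h2, mul_one]
  -- c is upper triangular, v has ones on the diagonal
  have hcU : IsInvUpper c := by
    have := inv_invUpper hb₂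
    exact ⟨fun i j hij => (tri_of_invUpper hb₁).mul (tri_of_invUpper this) hij,
      fun i => by
        have h1 : c.BlockTriangular id :=
          (tri_of_invUpper hb₁).mul (tri_of_invUpper (inv_invUpper hb₂))
        rw [hc, Matrix.mul_apply,
          Finset.sum_eq_single_of_mem i (Finset.mem_univ i) (fun k _ hk => by
            rcases lt_or_gt_of_ne hk with hlt | hgt
            · rw [hb₁.1 i k hlt, zero_mul]
            · rw [(inv_invUpper hb₂).1 k i hgt, mul_zero])]
        exact mul_ne_zero (hb₁.2 i) ((inv_invUpper hb₂).2 i)⟩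
  have hvdiag : ∀ i, v i i = 1 := by
    intro i
    have h₁ := inv_unipUpper hu₁
    rw [hv, Matrix.mul_apply,
      Finset.sum_eq_single_of_mem i (Finset.mem_univ i) (fun k _ hk => by
        rcases lt_or_gt_of_ne hk with hlt | hgt
        · rw [h₁.1 i k hlt, zero_mul]
        · rw [hu₂.1 k i hgt, mul_zero]), h₁.2 i, hu₂.2 i, one_mul]
  -- evaluate key at (i, τ i): c (σ i) (τ i) = 1
  have hle : ∀ i, σ i ≤ τ i := by
    intro i
    have := congrFun (congrFun key i) (τ i)
    rw [Matrix.mul_apply, Matrix.mul_apply] at this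
    have hL : ∑ l, permMat n F σ i l * c l (τ i) = c (σ i) (τ i) := by
      simp [permMat, ite_mul, Finset.sum_ite_eq]
    have hR : ∑ k, v i k * permMat n F τ k (τ i) = v i i := by
      have : ∀ k : Fin n, permMat n F τ k (τ i) = if k = i then 1 else 0 := by
        intro k
        simp only [permMat, Matrix.of_apply]
        by_cases hk : k = i
        · simp [hk]
        · simp [hk, fun hh => hk (τ.injective hh)]
      simp [this, mul_ite, Finset.sum_ite_eq']
    rw [hL, hR, hvdiag i] at this
    by_contra hlt
    push_neg at hlt
    rw [hcU.1 (σ i) (τ i) hlt] at this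
    exact zero_ne_one this
  -- pointwise ≤ between permutations ⇒ equal
  ext i
  by_contra hne
  have hlt : (σ i : ℕ) < τ i := lt_of_le_of_ne (hle i) hne
  have hsum : ∑ j : Fin n, (σ j : ℕ) = ∑ j : Fin n, (τ j : ℕ) := by
    rw [Equiv.sum_comp σ (fun j : Fin n => (j : ℕ)),
      Equiv.sum_comp τ (fun j : Fin n => (j : ℕ))]
  have : ∑ j : Fin n, (σ j : ℕ) < ∑ j : Fin n, (τ j : ℕ) :=
    Finset.sum_lt_sum (fun j _ => hle j) ⟨i, Finset.mem_univ i, hlt⟩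
  omega
end

section
/- Size of a Bruhat cell: for every σ ∈ S_n, the subset {u·M_σ·B : u ∈ U} of the left coset space G/B has cardinality exactly q^{ℓ(σ)}. -/
/-- The number of inversions `ℓ(σ) = |{(i,j) : i < j, σ(i) > σ(j)}|`. -/
def lenPerm {n : ℕ} (σ : Equiv.Perm (Fin n)) : ℕ :=
  (Finset.univ.filter fun p : Fin n × Fin n => p.1 < p.2 ∧ σ p.2 < σ p.1).card

/-- The left coset `g·B` of the Borel subgroup `B`, as a set of matrices. -/
def cosetOf {n : ℕ} {F : Type*} [Field F] (g : Matrix (Fin n) (Fin n) F) :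
    Set (Matrix (Fin n) (Fin n) F) :=
  {x | ∃ b : Matrix (Fin n) (Fin n) F, IsInvUpper b ∧ x = g * b}

namespace BruhatAux

variable {n : ℕ} {F : Type*} [Field F] (σ : Equiv.Perm (Fin n))

/-- canonical representative matrix built from values `f` at inversion positions -/
def uMat (f : Fin n → Fin n → F) : Matrix (Fin n) (Fin n) F :=
  Matrix.of fun i j => if i = j then 1 else if i < j ∧ σ j < σ i then f i j else 0

variable {σ}

lemma uMat_unip (f : Fin n → Fin n → F) : IsUnipUpper (uMat σ f) := by
  constructor
  · intro i j hji
    simp only [uMat, Matrix.of_apply]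
    rw [if_neg (by rintro rfl; exact lt_irrefl _ hji), if_neg]
    rintro ⟨h1, -⟩; exact absurd hji (not_lt.2 h1.le)
  · intro i; simp [uMat]

lemma mul_permMat_apply (A : Matrix (Fin n) (Fin n) F) (i j : Fin n) :
    (A * permMat n F σ) i j = A i (σ.symm j) := by
  rw [Matrix.mul_apply]
  rw [Finset.sum_eq_single (σ.symm j)]
  · simp [permMat]
  · intro k _ hk
    rw [permMat, Matrix.of_apply, if_neg, mul_zero]
    intro h; exact hk (by simpa using congrArg σ.symm h)
  · simp

lemma permMat_mul_apply (A : Matrix (Fin n) (Fin n) F) (i j : Fin n) :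
    (permMat n F σ * A) i j = A (σ i) j := by
  rw [Matrix.mul_apply]
  rw [Finset.sum_eq_single (σ i)]
  · simp [permMat]
  · intro k _ hk; rw [permMat, Matrix.of_apply, if_neg (fun h => hk h.symm), zero_mul] -- σ i = k
  · simp

lemma mul_permMat_cancel {A B : Matrix (Fin n) (Fin n) F}
    (h : A * permMat n F σ = B * permMat n F σ) : A = B := by
  ext i j
  have := congrFun (congrFun h i) (σ j)
  rwa [mul_permMat_apply, mul_permMat_apply, Equiv.symm_apply_apply] at this

lemma invUpper_one : IsInvUpper (1 : Matrix (Fin n) (Fin n) F) := by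
  constructor
  · intro i j hji; exact Matrix.one_apply_ne (by rintro rfl; exact lt_irrefl _ hji)
  · intro i; simp

lemma invUpper_mul {a b : Matrix (Fin n) (Fin n) F} (ha : IsInvUpper a) (hb : IsInvUpper b) :
    IsInvUpper (a * b) := by
  constructor
  · intro i j hji
    rw [Matrix.mul_apply]
    apply Finset.sum_eq_zero
    intro k _
    rcases lt_or_ge j k with h | h
    · rw [hb.1 k j h, mul_zero]
    · rw [ha.1 i k (lt_of_le_of_lt h hji), zero_mul]
  · intro i
    rw [Matrix.mul_apply, Finset.sum_eq_single i]
    · exact mul_ne_zero (ha.2 i) (hb.2 i)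
    · intro k _ hk
      rcases lt_or_ge i k with h | h
      · rw [hb.1 k i h, mul_zero]
      · rw [ha.1 i k (lt_of_le_of_ne h hk), zero_mul]
    · simp

lemma invUpper_bt {b : Matrix (Fin n) (Fin n) F} (hb : IsInvUpper b) :
    b.BlockTriangular id := fun i j h => hb.1 i j h

lemma invUpper_inv {b : Matrix (Fin n) (Fin n) F} (hb : IsInvUpper b) :
    ∃ c, IsInvUpper c ∧ b * c = 1 ∧ c * b = 1 := by
  have hdet : b.det ≠ 0 := by
    rw [Matrix.det_of_upperTriangular (invUpper_bt hb)]
    exact Finset.prod_ne_zero_iff.2 fun i _ => hb.2 i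
  have hinv : Invertible b := b.invertibleOfIsUnitDet (Ne.isUnit hdet)
  have h1 : b * b⁻¹ = 1 := Matrix.mul_nonsing_inv b (Ne.isUnit hdet)
  have h2 : b⁻¹ * b = 1 := Matrix.nonsing_inv_mul b (Ne.isUnit hdet)
  refine ⟨b⁻¹, ⟨?_, ?_⟩, h1, h2⟩
  · exact fun i j h => Matrix.blockTriangular_inv_of_blockTriangular (invUpper_bt hb) h
  · intro i hzero
    have hdi : (b⁻¹).det ≠ 0 := by
      intro h0
      have := Matrix.det_mul b b⁻¹
      rw [h1, Matrix.det_one, h0, mul_zero] at this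
      exact one_ne_zero this
    rw [Matrix.det_of_upperTriangular
      (fun i j h => Matrix.blockTriangular_inv_of_blockTriangular (invUpper_bt hb) h)] at hdi
    exact hdi (Finset.prod_eq_zero (Finset.mem_univ i) hzero)

lemma coset_congr {g g' b : Matrix (Fin n) (Fin n) F} (hb : IsInvUpper b)
    (h : g * b = g') : cosetOf g = cosetOf g' := by
  obtain ⟨c, hc, hbc, hcb⟩ := invUpper_inv hb
  ext x
  constructor
  · rintro ⟨b1, hb1, rfl⟩
    refine ⟨c * b1, invUpper_mul hc hb1, ?_⟩
    rw [← h, mul_assoc, ← mul_assoc b, hbc, one_mul]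
  · rintro ⟨b2, hb2, rfl⟩
    exact ⟨b * b2, invUpper_mul hb hb2, by rw [← h, mul_assoc]⟩

end BruhatAux

namespace BruhatAux

variable {n : ℕ} {F : Type*} [Field F] {σ : Equiv.Perm (Fin n)}

lemma step (m : Fin n) (u : Matrix (Fin n) (Fin n) F) (hu : IsUnipUpper u)
    (hrows : ∀ t k : Fin n, m < t → t < k → σ t < σ k → u t k = 0) :
    ∃ u' b, IsUnipUpper u' ∧ IsInvUpper b ∧
      u * permMat n F σ * b = u' * permMat n F σ ∧
      ∀ t k : Fin n, m ≤ t → t < k → σ t < σ k → u' t k = 0 := by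
  classical
  set N : Matrix (Fin n) (Fin n) F :=
    Matrix.of (fun s k => if s = m ∧ m < k ∧ σ m < σ k then -(u m k) else 0) with hN
  set V : Matrix (Fin n) (Fin n) F := 1 + N with hV
  have hNval : ∀ s k, N s k = if s = m ∧ m < k ∧ σ m < σ k then -(u m k) else 0 :=
    fun s k => rfl
  have hmulN : ∀ (A : Matrix (Fin n) (Fin n) F) t k, (A * N) t k = A t m * N m k := by
    intro A t k
    rw [Matrix.mul_apply, Finset.sum_eq_single m]
    · intro s _ hs
      rw [hNval, if_neg (fun h => hs h.1), mul_zero]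
    · simp
  set u' : Matrix (Fin n) (Fin n) F := u * V with hu'
  have hu'val : ∀ t k, u' t k = u t k + u t m * N m k := by
    intro t k
    rw [hu', hV, Matrix.mul_add, Matrix.mul_one, Matrix.add_apply, hmulN]
  have hNg : ∀ k, N m k ≠ 0 → m < k := by
    intro k h
    rw [hNval] at h
    by_cases hc : m = m ∧ m < k ∧ σ m < σ k
    · exact hc.2.1
    · rw [if_neg hc] at h; exact absurd rfl h
  have hu'unip : IsUnipUpper u' := by
    constructor
    · intro i j hji
      rw [hu'val, hu.1 i j hji]
      by_cases h : N m j = 0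
      · rw [h, mul_zero, add_zero]
      · rw [hu.1 i m (lt_trans (hNg j h) hji), zero_mul, add_zero]
    · intro i
      rw [hu'val, hu.2 i]
      by_cases h : N m i = 0
      · rw [h, mul_zero, add_zero]
      · rw [hu.1 i m (hNg i h), zero_mul, add_zero]
  set b : Matrix (Fin n) (Fin n) F := Matrix.of (fun i j => V (σ.symm i) (σ.symm j)) with hb
  have hVval : ∀ s k, V s k = (if s = k then (1:F) else 0) +
      (if s = m ∧ m < k ∧ σ m < σ k then -(u m k) else 0) := by
    intro s k
    rw [hV, Matrix.add_apply, Matrix.one_apply, hNval]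
  have hbInv : IsInvUpper b := by
    constructor
    · intro i j hji
      rw [hb, Matrix.of_apply, hVval]
      rw [if_neg, if_neg, add_zero]
      · rintro ⟨h1, -, h3⟩
        rw [← h1, Equiv.apply_symm_apply, Equiv.apply_symm_apply] at h3
        exact absurd hji (not_lt.2 h3.le)
      · intro h
        exact absurd (σ.symm.injective h) (by rintro rfl; exact lt_irrefl _ hji)
    · intro i
      rw [hb, Matrix.of_apply, hVval, if_pos rfl, if_neg, add_zero]
      · exact one_ne_zero
      · rintro ⟨h1, h2, -⟩
        rw [h1] at h2
        exact lt_irrefl _ h2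
  have hcomm : permMat n F σ * b = V * permMat n F σ := by
    ext i j
    rw [permMat_mul_apply, mul_permMat_apply, hb, Matrix.of_apply, Equiv.symm_apply_apply]
  refine ⟨u', b, hu'unip, hbInv, ?_, ?_⟩
  · rw [mul_assoc, hcomm, ← mul_assoc, ← hu']
  · intro t k htm htk hstk
    rw [hu'val]
    rcases eq_or_lt_of_le htm with heq | hlt
    · have ht : t = m := heq.symm
      subst ht
      rw [hu.2 t, hNval, if_pos ⟨rfl, htk, hstk⟩, one_mul, add_neg_cancel]
    · rw [hrows t k hlt htk hstk, hu.1 t m hlt, zero_mul, add_zero]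

lemma reduce (u : Matrix (Fin n) (Fin n) F) (hu : IsUnipUpper u) :
    ∃ u' b, IsUnipUpper u' ∧ IsInvUpper b ∧
      u * permMat n F σ * b = u' * permMat n F σ ∧
      ∀ t k : Fin n, t < k → σ t < σ k → u' t k = 0 := by
  suffices h : ∀ d : ℕ, ∃ u' b, IsUnipUpper u' ∧ IsInvUpper b ∧
      u * permMat n F σ * b = u' * permMat n F σ ∧
      ∀ t k : Fin n, n - d ≤ (t : ℕ) → t < k → σ t < σ k → u' t k = 0 by
    obtain ⟨u', b, h1, h2, h3, h4⟩ := h n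
    exact ⟨u', b, h1, h2, h3, fun t k => h4 t k (by omega)⟩
  intro d
  induction d with
  | zero =>
    refine ⟨u, 1, hu, invUpper_one, by rw [mul_one], ?_⟩
    intro t k ht _ _
    exact absurd t.isLt (by omega)
  | succ d ih =>
    obtain ⟨u1, b1, h1, h2, h3, h4⟩ := ih
    by_cases hlt : n - (d + 1) < n
    · have hyp : ∀ t k : Fin n, (⟨n - (d + 1), hlt⟩ : Fin n) < t → t < k → σ t < σ k →
          u1 t k = 0 := by
        intro t k htm htk hstk
        apply h4 t k _ htk hstk
        have h5 : n - (d+1) < (t : ℕ) := Fin.lt_def.1 htm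
        omega
      obtain ⟨u2, b2, g1, g2, g3, g4⟩ := step (σ := σ) ⟨n - (d + 1), hlt⟩ u1 h1 hyp
      refine ⟨u2, b1 * b2, g1, invUpper_mul h2 g2, ?_, ?_⟩
      · rw [← mul_assoc, h3, g3]
      · intro t k ht
        refine g4 t k ?_
        rw [Fin.le_def]
        have : n - (d+1) ≤ (t:ℕ) := by omega
        exact this
    · refine ⟨u1, b1, h1, h2, h3, ?_⟩
      intro t _ _ _ _
      exact absurd t.isLt (by omega)

lemma reduced_eq_uMat (u : Matrix (Fin n) (Fin n) F) (hu : IsUnipUpper u)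
    (h : ∀ t k : Fin n, t < k → σ t < σ k → u t k = 0) :
    u = uMat σ (fun i j => u i j) := by
  ext i j
  rw [uMat, Matrix.of_apply]
  by_cases hij : i = j
  · subst hij; rw [if_pos rfl, hu.2]
  · rw [if_neg hij]
    by_cases hc : i < j ∧ σ j < σ i
    · rw [if_pos hc]
    · rw [if_neg hc]
      rcases lt_trichotomy i j with h1 | h1 | h1
      · rcases lt_trichotomy (σ i) (σ j) with h2 | h2 | h2
        · exact h i j h1 h2
        · exact absurd (σ.injective h2) hij
        · exact absurd ⟨h1, h2⟩ hc
      · exact absurd h1 hij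
      · exact hu.1 i j h1

end BruhatAux

namespace BruhatAux

variable {n : ℕ} {F : Type*} [Field F] {σ : Equiv.Perm (Fin n)}

lemma normal_unique (f f' : Fin n → Fin n → F) (b : Matrix (Fin n) (Fin n) F)
    (hb : IsInvUpper b)
    (heq : uMat σ f' * permMat n F σ = uMat σ f * permMat n F σ * b) :
    ∀ i j : Fin n, i < j → σ j < σ i → f' i j = f i j := by
  classical
  set v : Matrix (Fin n) (Fin n) F := Matrix.of (fun i j => b (σ i) (σ j)) with hv
  have hcomm : permMat n F σ * b = v * permMat n F σ := by
    ext i j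
    rw [permMat_mul_apply, mul_permMat_apply, hv, Matrix.of_apply, Equiv.apply_symm_apply]
  have heq2 : uMat σ f' = uMat σ f * v := by
    apply mul_permMat_cancel (σ := σ)
    rw [heq, mul_assoc, hcomm, ← mul_assoc]
  have key : ∀ d : ℕ, ∀ t : Fin n, n - d ≤ (t : ℕ) → ∀ k, v t k = if t = k then 1 else 0 := by
    intro d
    induction d with
    | zero =>
      intro t ht
      exact absurd t.isLt (by omega)
    | succ d ih =>
      intro t ht k
      have hIH : ∀ s : Fin n, t < s → ∀ k', v s k' = if s = k' then 1 else 0 := by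
        intro s hs k'
        apply ih
        have := Fin.lt_def.1 hs
        omega
      have hsum : (uMat σ f * v) t k = v t k + (if t < k ∧ σ k < σ t then f t k else 0) := by
        rw [Matrix.mul_apply]
        have hpt : ∀ s : Fin n, uMat σ f t s * v s k =
            (if s = t then v t k else 0) +
            (if s = k then (if t < k ∧ σ k < σ t then f t k else 0) else 0) := by
          intro s
          by_cases hst : s = t
          · subst hst
            rw [if_pos rfl, uMat, Matrix.of_apply, if_pos rfl, one_mul]
            by_cases hsk : s = k
            · subst hsk
              rw [if_pos rfl, if_neg (by rintro ⟨h1, -⟩; exact lt_irrefl _ h1), add_zero]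
            · rw [if_neg hsk, add_zero]
          · rw [if_neg hst]
            by_cases hcond : t < s ∧ σ s < σ t
            · rw [uMat, Matrix.of_apply, if_neg (fun h => hst h.symm), if_pos hcond,
                hIH s hcond.1]
              by_cases hsk : s = k
              · subst hsk
                rw [if_pos rfl, if_pos rfl, if_pos hcond, mul_one, zero_add]
              · rw [if_neg hsk, if_neg hsk, mul_zero, zero_add]
            · rw [uMat, Matrix.of_apply, if_neg (fun h => hst h.symm), if_neg hcond, zero_mul]
              by_cases hsk : s = k
              · subst hsk
                rw [if_pos rfl, if_neg hcond, zero_add]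
              · rw [if_neg hsk, zero_add]
        rw [Finset.sum_congr rfl (fun s _ => hpt s), Finset.sum_add_distrib,
          Finset.sum_ite_eq' Finset.univ t (fun _ => v t k),
          Finset.sum_ite_eq' Finset.univ k
            (fun _ => if t < k ∧ σ k < σ t then f t k else 0),
          if_pos (Finset.mem_univ t), if_pos (Finset.mem_univ k)]
      rw [← heq2] at hsum
      by_cases hinv : t < k ∧ σ k < σ t
      · rw [if_neg (by rintro rfl; exact lt_irrefl _ hinv.1)]
        rw [hv, Matrix.of_apply]
        exact hb.1 _ _ hinv.2
      · have h0 : uMat σ f' t k = v t k := by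
          rw [hsum, if_neg hinv, add_zero]
        rw [← h0, uMat, Matrix.of_apply]
        by_cases htk : t = k
        · rw [if_pos htk, if_pos htk]
        · rw [if_neg htk, if_neg htk, if_neg hinv]
  have hv1 : v = 1 := by
    ext t k
    rw [key n t (by omega) k, Matrix.one_apply]
  rw [hv1, mul_one] at heq2
  intro i j hij hsij
  have hthis := congrFun (congrFun heq2 i) j
  have hne : ¬ i = j := by rintro rfl; exact lt_irrefl _ hij
  rw [uMat, uMat, Matrix.of_apply, Matrix.of_apply, if_neg hne, if_pos ⟨hij, hsij⟩,
    if_neg hne, if_pos ⟨hij, hsij⟩] at hthis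
  exact hthis

end BruhatAux


/-- Size of a Bruhat cell: for every `σ ∈ S_n`, the subset
`{u·M_σ·B : u ∈ U}` of the left coset space `G/B` has cardinality `q^{ℓ(σ)}`. -/
theorem bruhat_cell_card (q n : ℕ) (hn : 1 ≤ n) (F : Type*) [Field F] [Fintype F]
    (hF : Fintype.card F = q) (σ : Equiv.Perm (Fin n)) :
    Nat.card ↥{S : Set (Matrix (Fin n) (Fin n) F) |
        ∃ u : Matrix (Fin n) (Fin n) F, IsUnipUpper u ∧ S = cosetOf (u * permMat n F σ)} =
      q ^ lenPerm σ := by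
  classical
  open BruhatAux in
  let ext : ({p : Fin n × Fin n // p.1 < p.2 ∧ σ p.2 < σ p.1} → F) → Fin n → Fin n → F :=
    fun f i j => if h : i < j ∧ σ j < σ i then f ⟨(i, j), h⟩ else 0
  let Φ : ({p : Fin n × Fin n // p.1 < p.2 ∧ σ p.2 < σ p.1} → F) →
      Set (Matrix (Fin n) (Fin n) F) :=
    fun f => cosetOf (BruhatAux.uMat σ (ext f) * permMat n F σ)
  have hext : ∀ f (i j : Fin n) (h1 : i < j) (h2 : σ j < σ i),
      ext f i j = f ⟨(i, j), ⟨h1, h2⟩⟩ := by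
    intro f i j h1 h2
    simp only [ext]
    rw [dif_pos ⟨h1, h2⟩]
  have huMat_ext : ∀ (f g : Fin n → Fin n → F),
      (∀ i j : Fin n, i < j → σ j < σ i → f i j = g i j) →
      BruhatAux.uMat σ f = BruhatAux.uMat σ g := by
    intro f g h
    ext i j
    simp only [BruhatAux.uMat, Matrix.of_apply]
    by_cases hij : i = j
    · rw [if_pos hij, if_pos hij]
    · rw [if_neg hij, if_neg hij]
      by_cases hc : i < j ∧ σ j < σ i
      · rw [if_pos hc, if_pos hc, h i j hc.1 hc.2]
      · rw [if_neg hc, if_neg hc]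
  have hset : {S : Set (Matrix (Fin n) (Fin n) F) |
      ∃ u : Matrix (Fin n) (Fin n) F, IsUnipUpper u ∧ S = cosetOf (u * permMat n F σ)} =
      Set.range Φ := by
    ext S
    constructor
    · rintro ⟨u, hu, rfl⟩
      obtain ⟨u', b, h1, h2, h3, h4⟩ := BruhatAux.reduce (σ := σ) u hu
      refine ⟨fun p => u' p.1.1 p.1.2, ?_⟩
      have hu'eq : BruhatAux.uMat σ (ext (fun p => u' p.1.1 p.1.2)) = u' := by
        rw [huMat_ext (ext (fun p => u' p.1.1 p.1.2)) (fun i j => u' i j)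
          (by intro i j h1' h2'; exact hext (fun p => u' p.1.1 p.1.2) i j h1' h2')]
        exact (BruhatAux.reduced_eq_uMat u' h1 h4).symm
      show cosetOf (BruhatAux.uMat σ (ext (fun p => u' p.1.1 p.1.2)) * permMat n F σ) =
        cosetOf (u * permMat n F σ)
      rw [hu'eq]
      exact (BruhatAux.coset_congr h2 h3).symm
    · rintro ⟨f, rfl⟩
      exact ⟨BruhatAux.uMat σ (ext f), BruhatAux.uMat_unip _, rfl⟩
  have hΦinj : Function.Injective Φ := by
    intro f f' hff
    have hmem : BruhatAux.uMat σ (ext f') * permMat n F σ ∈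
        cosetOf (BruhatAux.uMat σ (ext f) * permMat n F σ) := by
      have : BruhatAux.uMat σ (ext f') * permMat n F σ ∈ Φ f' :=
        ⟨1, BruhatAux.invUpper_one, (mul_one _).symm⟩
      rwa [← hff] at this
    obtain ⟨b, hb, hxb⟩ := hmem
    have hkey := BruhatAux.normal_unique (ext f) (ext f') b hb hxb
    funext p
    have hp := hkey p.1.1 p.1.2 p.2.1 p.2.2
    rw [hext f' p.1.1 p.1.2 p.2.1 p.2.2, hext f p.1.1 p.1.2 p.2.1 p.2.2] at hp
    simpa using hp.symm
  rw [hset, Nat.card_range_of_injective hΦinj, Nat.card_fun]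
  congr 1
  · rw [Nat.card_eq_fintype_card, hF]
  · rw [Nat.card_eq_fintype_card, lenPerm, Fintype.card_subtype]
end

section
/- For every real q > 0, the vector v = (0, 1, −1, 1, −1, 0) is an eigenvector of M(q) with eigenvalue (2q−2)/(2q+1); that is, M(q)·v = ((2q−2)/(2q+1))·v. -/
/-- `D₁(q) = q³+2q²+2q+1`. -/
noncomputable def D1 (q : ℝ) : ℝ := q ^ 3 + 2 * q ^ 2 + 2 * q + 1

/-- `D₂(q) = 2q⁴+5q³+6q²+4q+1 = (2q+1)·D₁(q)`. -/
noncomputable def D2 (q : ℝ) : ℝ := 2 * q ^ 4 + 5 * q ^ 3 + 6 * q ^ 2 + 4 * q + 1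

/-- The transition matrix `M(q)` of the Burnside process on `S₃` arising from
`GL₃(F_q)`, with states ordered `e, s₁, s₂, s₂s₁, s₁s₂, w₀`. -/
noncomputable def burnsideGL3 (q : ℝ) : Matrix (Fin 6) (Fin 6) ℝ :=
  !![q ^ 3 / D1 q, (q ^ 3 + 2 * q ^ 2 + q - 1) / D2 q, (q ^ 3 + 2 * q ^ 2 + q - 1) / D2 q,
      (q ^ 3 + q ^ 2 + 1) / D2 q, (q ^ 3 + q ^ 2 + 1) / D2 q, 1 / D1 q;
    (q ^ 3 + 2 * q ^ 2 + q - 1) / D2 q, (q ^ 4 + 2 * q ^ 3 + q ^ 2 - q) / D2 q,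
      (q ^ 3 + q ^ 2 + 1) / D2 q, (q ^ 4 + q ^ 3 + q) / D2 q, 1 / D1 q, q / D1 q;
    (q ^ 3 + 2 * q ^ 2 + q - 1) / D2 q, (q ^ 3 + q ^ 2 + 1) / D2 q,
      (q ^ 4 + 2 * q ^ 3 + q ^ 2 - q) / D2 q, 1 / D1 q, (q ^ 4 + q ^ 3 + q) / D2 q, q / D1 q;
    (q ^ 3 + q ^ 2 + 1) / D2 q, (q ^ 4 + q ^ 3 + q) / D2 q, 1 / D1 q,
      (q ^ 4 + q ^ 3 + 2 * q ^ 2 - 1) / D2 q, q / D1 q, q ^ 2 / D1 q;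
    (q ^ 3 + q ^ 2 + 1) / D2 q, 1 / D1 q, (q ^ 4 + q ^ 3 + q) / D2 q, q / D1 q,
      (q ^ 4 + q ^ 3 + 2 * q ^ 2 - 1) / D2 q, q ^ 2 / D1 q;
    1 / D1 q, q / D1 q, q / D1 q, q ^ 2 / D1 q, q ^ 2 / D1 q, q ^ 3 / D1 q]


private lemma vc2 {α : Type*} (x : α) (u : Fin 5 → α) : Matrix.vecCons x u 2 = u 1 := rfl
private lemma vc3 {α : Type*} (x : α) (u : Fin 5 → α) : Matrix.vecCons x u 3 = u 2 := rfl
private lemma vc4 {α : Type*} (x : α) (u : Fin 5 → α) : Matrix.vecCons x u 4 = u 3 := rfl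
private lemma vc5 {α : Type*} (x : α) (u : Fin 5 → α) : Matrix.vecCons x u 5 = u 4 := rfl
private lemma wc2 {α : Type*} (x : α) (u : Fin 4 → α) : Matrix.vecCons x u 2 = u 1 := rfl
private lemma wc3 {α : Type*} (x : α) (u : Fin 4 → α) : Matrix.vecCons x u 3 = u 2 := rfl
private lemma wc4 {α : Type*} (x : α) (u : Fin 4 → α) : Matrix.vecCons x u 4 = u 3 := rfl
private lemma xc2 {α : Type*} (x : α) (u : Fin 3 → α) : Matrix.vecCons x u 2 = u 1 := rfl
private lemma xc3 {α : Type*} (x : α) (u : Fin 3 → α) : Matrix.vecCons x u 3 = u 2 := rfl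
private lemma yc2 {α : Type*} (x : α) (u : Fin 2 → α) : Matrix.vecCons x u 2 = u 1 := rfl

/-- For every real `q > 0`, the vector `v = (0, 1, −1, 1, −1, 0)` is an
eigenvector of `M(q)` with eigenvalue `(2q−2)/(2q+1)`. -/
theorem burnsideGL3_second_eigenvector (q : ℝ) (hq : 0 < q) :
    (burnsideGL3 q).mulVec ![0, 1, -1, 1, -1, 0] =
      ((2 * q - 2) / (2 * q + 1)) • ![0, 1, -1, 1, -1, 0] := by
  have hD1 : D1 q ≠ 0 := by unfold D1; nlinarith [pow_pos hq 3, pow_pos hq 2]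
  have hD2 : D2 q ≠ 0 := by unfold D2; nlinarith [pow_pos hq 4, pow_pos hq 3, pow_pos hq 2]
  have h21 : 2 * q + 1 ≠ 0 := by linarith
  have hD : D2 q = (2 * q + 1) * D1 q := by unfold D1 D2; ring
  funext i
  fin_cases i <;>
    simp [burnsideGL3, Matrix.mulVec, dotProduct, Fin.sum_univ_six, Matrix.cons_val_zero, Matrix.cons_val_one, Matrix.head_cons, Matrix.cons_val_succ, vc2, vc3, vc4, vc5, wc2, wc3, wc4, xc2, xc3, yc2] <;>
    rw [hD] <;> field_simp <;> unfold D1 <;> ring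
end

section
/- Lower bound on convergence for the GL₃ Burnside chain: for every real q ≥ 1, every integer l ≥ 1, and every state x ∈ {2, 3, 4, 5} (the states s₁, s₂, s₂s₁, s₁s₂), one has Σ_{j=1}^{6} |(M(q)^l)_{xj} − 1/6| ≥ (1/2)·(1 − 3/(2q+1))^l. -/
@[simp]
lemma Matrix.cons_val_five' {m : ℕ} {α : Type*} (x : α) (u : Fin (m+5) → α) :
    Matrix.vecCons x u 5 =
      Matrix.vecHead (Matrix.vecTail (Matrix.vecTail (Matrix.vecTail (Matrix.vecTail u)))) :=
  rfl

/-- The eigenvector `(0,-1,1,-1,1,0)`. -/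
noncomputable def eigV : Fin 6 → ℝ := ![0, -1, 1, -1, 1, 0]

lemma eig_base (q : ℝ) (hq : 1 ≤ q) :
    Matrix.mulVec (burnsideGL3 q) eigV = (1 - 3 / (2 * q + 1)) • eigV := by
  have hq0 : 0 < q := lt_of_lt_of_le one_pos hq
  have hD1 : D1 q ≠ 0 := by
    have : 0 < D1 q := by unfold D1; positivity
    exact ne_of_gt this
  have hD2 : D2 q ≠ 0 := by
    have : 0 < D2 q := by unfold D2; positivity
    exact ne_of_gt this
  have h2q : (2 * q + 1) ≠ 0 := by positivity
  have hD2eq : D2 q = (2 * q + 1) * D1 q := by unfold D1 D2; ring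
  funext i
  fin_cases i <;>
    simp [burnsideGL3, eigV, hD2eq, Matrix.mulVec, dotProduct, Fin.sum_univ_six] <;>
    · field_simp
      simp only [D1]
      ring

lemma eig_pow (q : ℝ) (hq : 1 ≤ q) (l : ℕ) :
    Matrix.mulVec (burnsideGL3 q ^ l) eigV = ((1 - 3 / (2 * q + 1)) ^ l) • eigV := by
  induction l with
  | zero => simp [Matrix.mulVec_one]
  | succ n ih =>
    rw [pow_succ, ← Matrix.mulVec_mulVec, eig_base q hq, Matrix.mulVec_smul, ih,
      smul_smul, pow_succ]
    ring_nf

/-- Lower bound on convergence for the `GL₃` Burnside chain: for every real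
`q ≥ 1`, every integer `l ≥ 1`, and every state `x ∈ {s₁, s₂, s₂s₁, s₁s₂}`
(the states numbered `2,3,4,5`, i.e. indices `1,2,3,4` of `Fin 6`), one has
`Σ_{j=1}^{6} |(M(q)^l)_{xj} − 1/6| ≥ (1/2)·(1 − 3/(2q+1))^l`. -/
theorem burnsideGL3_mixing_lower_bound (q : ℝ) (hq : 1 ≤ q) (l : ℕ) (hl : 1 ≤ l)
    (x : Fin 6) (hx : x = 1 ∨ x = 2 ∨ x = 3 ∨ x = 4) :
    (1 / 2) * (1 - 3 / (2 * q + 1)) ^ l ≤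
      ∑ j : Fin 6, |(burnsideGL3 q ^ l) x j - 1 / 6| := by
  set β : ℝ := 1 - 3 / (2 * q + 1) with hβ
  have h2q : (0:ℝ) < 2 * q + 1 := by linarith
  have hβ0 : 0 ≤ β := by
    rw [hβ, sub_nonneg, div_le_one h2q]; linarith
  have hβl : 0 ≤ β ^ l := pow_nonneg hβ0 l
  have hev := eig_pow q hq l
  have hsum : ∑ j : Fin 6, ((burnsideGL3 q ^ l) x j - 1 / 6) * eigV j = β ^ l * eigV x := by
    have h1 : ∑ j : Fin 6, (burnsideGL3 q ^ l) x j * eigV j = β ^ l * eigV x := by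
      have := congrFun hev x
      simpa [Matrix.mulVec, dotProduct] using this
    have h2 : ∑ j : Fin 6, (1 / 6 : ℝ) * eigV j = 0 := by
      simp [eigV, Fin.sum_univ_six]
    calc ∑ j : Fin 6, ((burnsideGL3 q ^ l) x j - 1 / 6) * eigV j
        = (∑ j : Fin 6, (burnsideGL3 q ^ l) x j * eigV j)
          - ∑ j : Fin 6, (1 / 6 : ℝ) * eigV j := by
          rw [← Finset.sum_sub_distrib]; congr 1; funext j; ring
      _ = β ^ l * eigV x := by rw [h1, h2, sub_zero]
  have habs : |eigV x| = 1 := by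
    rcases hx with h | h | h | h <;> subst h <;> simp [eigV]
  have key : β ^ l ≤ ∑ j : Fin 6, |(burnsideGL3 q ^ l) x j - 1 / 6| := by
    calc β ^ l = |β ^ l * eigV x| := by
          rw [abs_mul, habs, mul_one, abs_of_nonneg hβl]
      _ = |∑ j : Fin 6, ((burnsideGL3 q ^ l) x j - 1 / 6) * eigV j| := by rw [hsum]
      _ ≤ ∑ j : Fin 6, |((burnsideGL3 q ^ l) x j - 1 / 6) * eigV j| :=
          Finset.abs_sum_le_sum_abs _ _
      _ ≤ ∑ j : Fin 6, |(burnsideGL3 q ^ l) x j - 1 / 6| := by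
          apply Finset.sum_le_sum
          intro j _
          rw [abs_mul]
          have : |eigV j| ≤ 1 := by fin_cases j <;> simp [eigV]
          nlinarith [abs_nonneg ((burnsideGL3 q ^ l) x j - 1 / 6)]
  nlinarith
end
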